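/- If a pure GK theory T has a GK model M, then K(M) is the deductive closure of a subset of Atom_K(T); that is, K(M) = Th({φ ∈ Atom_K(T) : φ ∈ K(M)}). -/

import Mathlib

namespace GKPaper

/-- Propositional formulas over atoms of type `α`. -/
inductive PForm (α : Type) : Type
  | bot : PForm α
  | atom : α → PForm α
  | neg : PForm α → PForm α
  | and : PForm α → PForm α → PForm α
  | or : PForm α → PForm α → PForm α

namespace PForm

def top {α : Type} : PForm α := neg bot

def imp {α : Type} (f g : PForm α) : PForm α := or (neg f) g

def eval {α : Type} (v : α → Prop) : PForm α → Prop
  | bot => False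
  | atom a => v a
  | neg f => ¬ eval v f
  | and f g => eval v f ∧ eval v g
  | or f g => eval v f ∨ eval v g

end PForm

/-- Classical propositional entailment. -/
def Entails {α : Type} (Γ : Set (PForm α)) (ψ : PForm α) : Prop :=
  ∀ v : α → Prop, (∀ φ ∈ Γ, φ.eval v) → ψ.eval v

/-- Propositional deductive closure. -/
def Th {α : Type} (Γ : Set (PForm α)) : Set (PForm α) := { ψ | Entails Γ ψ }

/-- GK formulas: propositional formulas with modalities K and A. -/
inductive GKForm (α : Type) : Type
  | bot : GKForm α
  | atom : α → GKForm α
  | neg : GKForm α → GKForm α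
  | and : GKForm α → GKForm α → GKForm α
  | or : GKForm α → GKForm α → GKForm α
  | K : GKForm α → GKForm α
  | A : GKForm α → GKForm α

def GKForm.imp {α : Type} (f g : GKForm α) : GKForm α := .or (.neg f) g

def PForm.toGK {α : Type} : PForm α → GKForm α
  | .bot => .bot
  | .atom a => .atom a
  | .neg f => .neg f.toGK
  | .and f g => .and f.toGK g.toGK
  | .or f g => .or f.toGK g.toGK

/-- A Kripke interpretation for the logic of GK. -/
structure Kripke (α : Type) where
  W : Type
  ne : Nonempty W
  pi : W → α → Prop
  RK : W → W → Prop
  RA : W → W → Prop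
  s : W

/-- Satisfaction of a GK formula at a world. -/
def Kripke.sat {α : Type} (M : Kripke α) : M.W → GKForm α → Prop
  | _, .bot => False
  | w, .atom a => M.pi w a
  | w, .neg f => ¬ M.sat w f
  | w, .and f g => M.sat w f ∧ M.sat w g
  | w, .or f g => M.sat w f ∨ M.sat w g
  | w, .K f => ∀ u, M.RK w u → M.sat u f
  | w, .A f => ∀ u, M.RA w u → M.sat u f

/-- K(M): the propositional formulas known in M. -/
def Kset {α : Type} (M : Kripke α) : Set (PForm α) :=
  { φ | M.sat M.s (.K φ.toGK) }

/-- A(M): the propositional formulas assumed in M. -/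
def Aset {α : Type} (M : Kripke α) : Set (PForm α) :=
  { φ | M.sat M.s (.A φ.toGK) }

def Kripke.models {α : Type} (M : Kripke α) (T : Set (GKForm α)) : Prop :=
  ∀ F ∈ T, M.sat M.s F

/-- GK model of a GK theory. -/
def GKModel {α : Type} (M : Kripke α) (T : Set (GKForm α)) : Prop :=
  M.models T ∧ Kset M = Aset M ∧
    ¬ ∃ M₁ : Kripke α, M₁.models T ∧ Aset M₁ = Aset M ∧ Kset M₁ ⊂ Kset M

/-- Pure GK formulas: Boolean combinations of K-atoms and A-atoms. -/
inductive PGK (α : Type) : Type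
  | bot : PGK α
  | Katom : PForm α → PGK α
  | Aatom : PForm α → PGK α
  | neg : PGK α → PGK α
  | and : PGK α → PGK α → PGK α
  | or : PGK α → PGK α → PGK α

def PGK.imp {α : Type} (f g : PGK α) : PGK α := .or (.neg f) g

def PGK.toGK {α : Type} : PGK α → GKForm α
  | .bot => .bot
  | .Katom φ => .K φ.toGK
  | .Aatom φ => .A φ.toGK
  | .neg f => .neg f.toGK
  | .and f g => .and f.toGK g.toGK
  | .or f g => .or f.toGK g.toGK

def Kripke.satP {α : Type} (M : Kripke α) (F : PGK α) : Prop := M.sat M.s F.toGK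

def Kripke.modelsP {α : Type} (M : Kripke α) (T : Set (PGK α)) : Prop :=
  ∀ F ∈ T, M.satP F

def GKModelP {α : Type} (M : Kripke α) (T : Set (PGK α)) : Prop :=
  M.modelsP T ∧ Kset M = Aset M ∧
    ¬ ∃ M₁ : Kripke α, M₁.modelsP T ∧ Aset M₁ = Aset M ∧ Kset M₁ ⊂ Kset M

def PGK.atomK {α : Type} : PGK α → Set (PForm α)
  | .bot => ∅
  | .Katom φ => {φ}
  | .Aatom _ => ∅
  | .neg f => f.atomK
  | .and f g => f.atomK ∪ g.atomK
  | .or f g => f.atomK ∪ g.atomK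

def PGK.atomA {α : Type} : PGK α → Set (PForm α)
  | .bot => ∅
  | .Katom _ => ∅
  | .Aatom φ => {φ}
  | .neg f => f.atomA
  | .and f g => f.atomA ∪ g.atomA
  | .or f g => f.atomA ∪ g.atomA

def AtomK {α : Type} (T : Set (PGK α)) : Set (PForm α) := ⋃ F ∈ T, F.atomK
def AtomA {α : Type} (T : Set (PGK α)) : Set (PForm α) := ⋃ F ∈ T, F.atomA

/-- Fresh atoms used in the translation: `k φ` for Kφ, `a φ` for Aφ,
    copies `pk p` (p^k), `pa p` (p^a), and witness copies `pkw ψ p` (p^{k_ψ}),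
    `paw ψ p` (p^{a_ψ}). -/
inductive XAtom (α : Type) : Type
  | k : PForm α → XAtom α
  | a : PForm α → XAtom α
  | pk : α → XAtom α
  | pa : α → XAtom α
  | pkw : PForm α → α → XAtom α
  | paw : PForm α → α → XAtom α

/-- tr_p: replace K-atoms and A-atoms by fresh atoms. -/
def PGK.trp {α : Type} : PGK α → PForm (XAtom α)
  | .bot => .bot
  | .Katom φ => .atom (.k φ)
  | .Aatom φ => .atom (.a φ)
  | .neg f => .neg f.trp
  | .and f g => .and f.trp g.trp
  | .or f g => .or f.trp g.trp

/-- `I` is a model of the formula Φ_T = tr_p(T) ∧ Φ_snd ∧ Φ^K_wit ∧ Φ^A_wit. -/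
def SatPhi {α : Type} (T : Set (PGK α)) (I : XAtom α → Prop) : Prop :=
  (∀ F ∈ T, (PGK.trp F).eval I) ∧
  (∀ φ ∈ AtomK T, I (.k φ) → φ.eval (fun p => I (.pk p))) ∧
  (∀ φ ∈ AtomA T, I (.a φ) → φ.eval (fun p => I (.pa p))) ∧
  (∀ ψ ∈ AtomK T, ¬ I (.k ψ) →
      ¬ ψ.eval (fun p => I (.pkw ψ p)) ∧
      ∀ φ ∈ AtomK T, I (.k φ) → φ.eval (fun p => I (.pkw ψ p))) ∧
  (∀ ψ ∈ AtomA T, ¬ I (.a ψ) →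
      ¬ ψ.eval (fun p => I (.paw ψ p)) ∧
      ∀ φ ∈ AtomA T, I (.a φ) → φ.eval (fun p => I (.paw ψ p)))

/-- Reiter defaults and default theories. -/
structure Default (α : Type) where
  pre : PForm α
  jus : List (PForm α)
  con : PForm α

structure DefaultTheory (α : Type) where
  W : Set (PForm α)
  D : Set (Default α)

/-- `G` contains W, is deductively closed, and closed under applicable defaults w.r.t. `S`. -/
def GammaClosed {α : Type} (Δ : DefaultTheory α) (S G : Set (PForm α)) : Prop :=
  Δ.W ⊆ G ∧ Th G = G ∧
    ∀ d ∈ Δ.D, d.pre ∈ G → (∀ ψ ∈ d.jus, PForm.neg ψ ∉ S) → d.con ∈ G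

/-- Γ(S): the smallest such set. -/
def Gamma {α : Type} (Δ : DefaultTheory α) (S : Set (PForm α)) : Set (PForm α) :=
  ⋂₀ { G | GammaClosed Δ S G }

def IsExtension {α : Type} (Δ : DefaultTheory α) (E : Set (PForm α)) : Prop :=
  Gamma Δ E = E

/-- Literals. -/
inductive Lit (α : Type) : Type
  | pos : α → Lit α
  | neg : α → Lit α

def Consistent {α : Type} (S : Set (Lit α)) : Prop :=
  ∀ a : α, ¬ (Lit.pos a ∈ S ∧ Lit.neg a ∈ S)

/-- Nested expressions. -/
inductive NExp (α : Type) : Type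
  | lit : Lit α → NExp α
  | top : NExp α
  | bot : NExp α
  | not : NExp α → NExp α
  | conj : NExp α → NExp α → NExp α
  | disj : NExp α → NExp α → NExp α

def NExp.sat {α : Type} (S : Set (Lit α)) : NExp α → Prop
  | .lit l => l ∈ S
  | .top => True
  | .bot => False
  | .not F => ¬ NExp.sat S F
  | .conj F G => NExp.sat S F ∧ NExp.sat S G
  | .disj F G => NExp.sat S F ∨ NExp.sat S G

def NExp.notFree {α : Type} : NExp α → Prop
  | .lit _ => True
  | .top => True
  | .bot => True
  | .not _ => False
  | .conj F G => F.notFree ∧ G.notFree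
  | .disj F G => F.notFree ∧ G.notFree

open Classical in
/-- The reduct of a nested expression w.r.t. `S`. -/
noncomputable def NExp.reduct {α : Type} (S : Set (Lit α)) : NExp α → NExp α
  | .lit l => .lit l
  | .top => .top
  | .bot => .bot
  | .not F => if NExp.sat S F then .bot else .top
  | .conj F G => .conj (F.reduct S) (G.reduct S)
  | .disj F G => .disj (F.reduct S) (G.reduct S)

structure Rule (α : Type) where
  head : NExp α
  body : NExp α

def SatProg {α : Type} (S : Set (Lit α)) (P : Set (Rule α)) : Prop :=
  ∀ r ∈ P, NExp.sat S r.body → NExp.sat S r.head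

/-- Answer sets of not-free programs: minimal consistent sets satisfying the program. -/
def IsAnswerSetNF {α : Type} (P : Set (Rule α)) (S : Set (Lit α)) : Prop :=
  Consistent S ∧ SatProg S P ∧
    ∀ S' : Set (Lit α), Consistent S' → SatProg S' P → S' ⊆ S → S' = S

noncomputable def ReductProg {α : Type} (S : Set (Lit α)) (P : Set (Rule α)) : Set (Rule α) :=
  (fun r => Rule.mk (r.head.reduct S) (r.body.reduct S)) '' P

def IsAnswerSet {α : Type} (P : Set (Rule α)) (S : Set (Lit α)) : Prop :=
  IsAnswerSetNF (ReductProg S P) S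

/-- Formulas in negation normal form. -/
inductive NNF (α : Type) : Type
  | top : NNF α
  | bot : NNF α
  | pos : α → NNF α
  | neg : α → NNF α
  | and : NNF α → NNF α → NNF α
  | or : NNF α → NNF α → NNF α

def NNF.eval {α : Type} (v : α → Prop) : NNF α → Prop
  | .top => True
  | .bot => False
  | .pos a => v a
  | .neg a => ¬ v a
  | .and f g => f.eval v ∧ g.eval v
  | .or f g => f.eval v ∨ g.eval v

/-- tr_ne: translate an NNF formula to a nested expression. -/
def NNF.toNExp {α : Type} : NNF α → NExp α
  | .top => .top
  | .bot => .bot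
  | .pos a => .lit (.pos a)
  | .neg a => .lit (.neg a)
  | .and f g => .conj f.toNExp g.toNExp
  | .or f g => .disj f.toNExp g.toNExp

/-- Autoepistemic formulas: propositional formulas with belief modality L. -/
inductive AEForm (α : Type) : Type
  | bot : AEForm α
  | atom : α → AEForm α
  | L : AEForm α → AEForm α
  | neg : AEForm α → AEForm α
  | and : AEForm α → AEForm α → AEForm α
  | or : AEForm α → AEForm α → AEForm α

def AEForm.imp {α : Type} (f g : AEForm α) : AEForm α := .or (.neg f) g

/-- Flatten an AE formula into a propositional formula treating L-atoms as fresh atoms. -/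
def AEForm.flatten {α : Type} : AEForm α → PForm (α ⊕ AEForm α)
  | .bot => .bot
  | .atom a => .atom (.inl a)
  | .L φ => .atom (.inr φ)
  | .neg f => .neg f.flatten
  | .and f g => .and f.flatten g.flatten
  | .or f g => .or f.flatten g.flatten

/-- Deductive closure in the modal language, treating L-atoms as atoms. -/
def ThAE {α : Type} (Γ : Set (AEForm α)) : Set (AEForm α) :=
  { ψ | Entails (AEForm.flatten '' Γ) ψ.flatten }

/-- Moore expansions. -/
def IsExpansion {α : Type} (A T : Set (AEForm α)) : Prop :=
  T = ThAE (A ∪ { F | ∃ φ ∈ T, F = AEForm.L φ } ∪ { F | ∃ φ ∉ T, F = AEForm.neg (AEForm.L φ) })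

def PForm.toAE {α : Type} : PForm α → AEForm α
  | .bot => .bot
  | .atom a => .atom a
  | .neg f => .neg f.toAE
  | .and f g => .and f.toAE g.toAE
  | .or f g => .or f.toAE g.toAE

/-- Disjunctive logic program rules. -/
structure DRule (α : Type) where
  head : List α
  pos : List α
  neg : List α

/-- `S'` satisfies the GL reduct of `P` w.r.t. `S`. -/
def SatDReduct {α : Type} (S' S : Set α) (P : Set (DRule α)) : Prop :=
  ∀ r ∈ P, (∀ a ∈ r.neg, a ∉ S) → (∀ a ∈ r.pos, a ∈ S') → ∃ a ∈ r.head, a ∈ S'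

def IsDAnswerSet {α : Type} (P : Set (DRule α)) (S : Set α) : Prop :=
  SatDReduct S S P ∧ ∀ S' ⊆ S, SatDReduct S' S P → S' = S

/-- The Lin–Zhou style translation of a disjunctive rule to a pure GK formula. -/
def DRule.toGK {α : Type} (r : DRule α) : PGK α :=
  PGK.imp
    (PGK.and
      (r.pos.foldr (fun a f => PGK.and (.Katom (.atom a)) f) (PGK.neg .bot))
      (r.neg.foldr (fun a f => PGK.and (.neg (.Aatom (.atom a))) f) (PGK.neg .bot)))
    (r.head.foldr (fun a f => PGK.or (.Katom (.atom a)) f) .bot)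

/-!
Since `Kset M` is closed under entailment, only `Kset M ⊆ Th S` needs an argument, where `S` is
the set of known K-atoms of `T`. If `ψ ∈ Kset M` had a valuation `v` satisfying `S` but not `ψ`,
add to `M` a new world valued by `v` that is K-accessible from the actual world and nothing else.
This keeps `A(M)`, and keeps every K-atom of `T` known or unknown as before (the known ones hold
at `v`), so the new model still satisfies `T`; but it knows strictly less, since `ψ` is lost,
contradicting the minimality of the GK model `M`.
-/

@[simp]
lemma Kripke.sat_toGK {α : Type} (M : Kripke α) (w : M.W) (φ : PForm α) :
    M.sat w φ.toGK ↔ φ.eval (M.pi w) := by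
  induction φ with
  | bot => rfl
  | atom a => rfl
  | neg f ih => simp only [PForm.toGK, Kripke.sat, PForm.eval, ih]
  | and f g ihf ihg => simp only [PForm.toGK, Kripke.sat, PForm.eval, ihf, ihg]
  | or f g ihf ihg => simp only [PForm.toGK, Kripke.sat, PForm.eval, ihf, ihg]

lemma mem_Kset_iff {α : Type} (M : Kripke α) (φ : PForm α) :
    φ ∈ Kset M ↔ ∀ u, M.RK M.s u → φ.eval (M.pi u) := by
  simp only [Kset, Set.mem_ofPred_eq, Kripke.sat, Kripke.sat_toGK]

lemma mem_Aset_iff {α : Type} (M : Kripke α) (φ : PForm α) :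
    φ ∈ Aset M ↔ ∀ u, M.RA M.s u → φ.eval (M.pi u) := by
  simp only [Aset, Set.mem_ofPred_eq, Kripke.sat, Kripke.sat_toGK]

lemma Th_subset_Kset {α : Type} (M : Kripke α) {S : Set (PForm α)} (hS : S ⊆ Kset M) :
    Th S ⊆ Kset M := fun _ hψ ↦ (mem_Kset_iff M _).2 fun u hu ↦
  hψ (M.pi u) fun φ hφ ↦ (mem_Kset_iff M φ).1 (hS hφ) u hu

lemma Kripke.satP_congr {α : Type} {M M₁ : Kripke α} {F : PGK α}
    (hK : ∀ φ ∈ F.atomK, (φ ∈ Kset M ↔ φ ∈ Kset M₁))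
    (hA : ∀ φ ∈ F.atomA, (φ ∈ Aset M ↔ φ ∈ Aset M₁)) :
    M.satP F ↔ M₁.satP F := by
  induction F with
  | bot => rfl
  | Katom φ => exact hK φ rfl
  | Aatom φ => exact hA φ rfl
  | neg f ih => exact not_congr (ih hK hA)
  | and f g ihf ihg =>
      exact and_congr (ihf (fun φ hφ ↦ hK φ (.inl hφ)) (fun φ hφ ↦ hA φ (.inl hφ)))
        (ihg (fun φ hφ ↦ hK φ (.inr hφ)) (fun φ hφ ↦ hA φ (.inr hφ)))
  | or f g ihf ihg =>
      exact or_congr (ihf (fun φ hφ ↦ hK φ (.inl hφ)) (fun φ hφ ↦ hA φ (.inl hφ)))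
        (ihg (fun φ hφ ↦ hK φ (.inr hφ)) (fun φ hφ ↦ hA φ (.inr hφ)))

def Kripke.addKWorld {α : Type} (M : Kripke α) (v : α → Prop) : Kripke α where
  W := Option M.W
  ne := ⟨none⟩
  pi := fun w ↦ w.elim v M.pi
  RK := fun w u ↦ match w, u with
    | some w, some u => M.RK w u
    | some w, none => w = M.s
    | none, _ => False
  RA := fun w u ↦ match w, u with
    | some w, some u => M.RA w u
    | _, _ => False
  s := some M.s

lemma Kset_addKWorld {α : Type} (M : Kripke α) (v : α → Prop) :
    Kset (M.addKWorld v) = { φ | φ ∈ Kset M ∧ φ.eval v } := by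
  ext φ
  simp only [mem_Kset_iff, Set.mem_ofPred_eq]
  constructor
  · intro hφ
    exact ⟨fun u hu ↦ hφ (some u) hu, hφ none rfl⟩
  · rintro ⟨hM, hv⟩ (_ | u) hu
    exacts [hv, hM u hu]

lemma Aset_addKWorld {α : Type} (M : Kripke α) (v : α → Prop) :
    Aset (M.addKWorld v) = Aset M := by
  ext φ
  simp only [mem_Aset_iff]
  constructor
  · exact fun hφ u hu ↦ hφ (some u) hu
  · rintro hφ (_ | u) hu
    exacts [hu.elim, hφ u hu]

lemma Kripke.modelsP_addKWorld {α : Type} {T : Set (PGK α)} {M : Kripke α}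
    (hM : M.modelsP T) {v : α → Prop}
    (hv : ∀ φ ∈ AtomK T, φ ∈ Kset M → φ.eval v) :
    (M.addKWorld v).modelsP T := by
  intro F hF
  refine (Kripke.satP_congr (fun φ hφ ↦ ?_) (fun φ _ ↦ ?_)).1 (hM F hF)
  · rw [Kset_addKWorld]
    exact ⟨fun hK ↦ ⟨hK, hv φ (Set.mem_biUnion hF hφ) hK⟩, And.left⟩
  · rw [Aset_addKWorld]

end GKPaper

open GKPaper in
/-- Lin–Shoham Theorem 3.5: in a GK model M of a pure GK theory T,
K(M) is the deductive closure of the K-atoms of T that are known. -/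
theorem stmt19 {α : Type} (T : Set (PGK α)) (M : Kripke α)
    (h : GKModelP M T) :
    Kset M = Th { φ | φ ∈ AtomK T ∧ φ ∈ Kset M } := by
  refine subset_antisymm (fun ψ hψ ↦ ?_) (Th_subset_Kset M fun _ hφ ↦ hφ.2)
  by_contra hψTh
  obtain ⟨v, hv, hψv⟩ : ∃ v, (∀ φ ∈ AtomK T, φ ∈ Kset M → φ.eval v) ∧ ¬ ψ.eval v := by
    simpa [Th, Entails] using hψTh
  have hK : Kset (M.addKWorld v) ⊂ Kset M := by
    rw [Kset_addKWorld]
    exact ⟨fun φ hφ ↦ hφ.1, fun hsub ↦ hψv (hsub hψ).2⟩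
  exact h.2.2 ⟨M.addKWorld v, Kripke.modelsP_addKWorld h.1 hv, Aset_addKWorld M v, hK⟩
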